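/- Let G be a simple connected graph with minimum degree d_min and maximum degree d_max. Then for every vertex v_i, 1/d_max ≤ 𝓛E_G(v_i) ≤ 1/√(d_min). -/

import Mathlib

/-!
With `N = D^{-1/2} A D^{-1/2}` we have `𝓛 - I = -N`, so `|𝓛 - I| = |N| = √(N²)` and
`(N²)ᵢᵢ = ∑_{j ~ i} 1 / (dᵢ dⱼ)`, which lies between `1 / d_max` and `1 / d_min`.
The eigenvalues of `N` lie in `[-1, 1]`, because `I - N = D^{-1/2} L D^{-1/2}` and
`I + N = D^{-1/2} (D + A) D^{-1/2}` with `D + A = B Bᵀ` for the unsigned incidence matrix `B`;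
hence `λ² ≤ |λ|` gives `N² ≤ |N|`. Conversely `|N|ᵢᵢ² ≤ (|N|²)ᵢᵢ = (N²)ᵢᵢ` since `|N|` is symmetric.
-/

open Matrix BigOperators Finset

/-- The absolute value of a real matrix `B`, defined as `(B * Bᵀ)^(1/2)`. -/
noncomputable def matAbs {n : ℕ} (B : Matrix (Fin n) (Fin n) ℝ) : Matrix (Fin n) (Fin n) ℝ :=
  let hA : (B * Bᵀ).PosSemidef := Matrix.conjTranspose_eq_transpose_of_trivial B ▸
    Matrix.posSemidef_self_mul_conjTranspose B
  hA.1.eigenvectorUnitary.1 * Matrix.diagonal ((↑) ∘ (√·) ∘ hA.1.eigenvalues) *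
    (star hA.1.eigenvectorUnitary : Matrix (Fin n) (Fin n) ℝ)

/-- The (adjacency) energy of the vertex `i` of the graph `G`: `|A|_{ii}`. -/
noncomputable def vertexEnergy {n : ℕ} (G : SimpleGraph (Fin n)) [DecidableRel G.Adj]
    (i : Fin n) : ℝ :=
  matAbs (G.adjMatrix ℝ) i i

/-- The Laplacian energy of the vertex `i` of the graph `G`: `(|L - (2m/n) I|)_{ii}`. -/
noncomputable def vertexLapEnergy {n : ℕ} (G : SimpleGraph (Fin n)) [DecidableRel G.Adj]
    (i : Fin n) : ℝ :=
  matAbs (G.lapMatrix ℝ - ((2 * (G.edgeFinset.card : ℝ)) / n) • 1) i i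

/-- The normalized Laplacian `𝓛 = I - D^{-1/2} A D^{-1/2}` of the graph `G`. -/
noncomputable def normLap {n : ℕ} (G : SimpleGraph (Fin n)) [DecidableRel G.Adj] :
    Matrix (Fin n) (Fin n) ℝ :=
  1 - Matrix.diagonal (fun i => (Real.sqrt (G.degree i))⁻¹) * G.adjMatrix ℝ *
      Matrix.diagonal (fun i => (Real.sqrt (G.degree i))⁻¹)

/-- The normalized Laplacian energy of the vertex `i` of the graph `G`: `(|𝓛 - I|)_{ii}`. -/
noncomputable def vertexNormLapEnergy {n : ℕ} (G : SimpleGraph (Fin n)) [DecidableRel G.Adj]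
    (i : Fin n) : ℝ :=
  matAbs (normLap G - 1) i i

open scoped MatrixOrder

section

variable {A : Type*} [Ring A] [StarRing A] [TopologicalSpace A] [Algebra ℝ A]
  [ContinuousFunctionalCalculus ℝ A IsSelfAdjoint] [PartialOrder A] [StarOrderedRing A]
  [NonnegSpectrumClass ℝ A] [IsTopologicalRing A] [T2Space A]

lemma CFC.mul_self_le_abs {a : A} (ha : IsSelfAdjoint a) (h₁ : -1 ≤ a) (h₂ : a ≤ 1) :
    a * a ≤ CFC.abs a := by
  have hle : ∀ x ∈ spectrum ℝ a, x ≤ 1 := by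
    simpa using (le_algebraMap_iff_spectrum_le (r := (1 : ℝ)) ha).mp (by simpa using h₂)
  have hge : ∀ x ∈ spectrum ℝ a, -1 ≤ x := by
    simpa using (algebraMap_le_iff_le_spectrum (r := (-1 : ℝ)) ha).mp (by simpa using h₁)
  calc a * a = cfc (fun x : ℝ ↦ x * x) a := by rw [cfc_mul .., cfc_id' ..]
    _ ≤ cfc (‖·‖) a := cfc_mono fun x hx ↦ by
        rw [Real.norm_eq_abs, ← _root_.abs_mul_self, abs_mul]
        exact mul_le_of_le_one_left (_root_.abs_nonneg x) (abs_le.mpr ⟨hge x hx, hle x hx⟩)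
    _ = CFC.abs a := (CFC.abs_eq_cfc_norm a).symm

end

namespace Matrix

lemma apply_self_le_of_le {m : Type*} {a b : Matrix m m ℝ} (h : a ≤ b) (i : m) :
    a i i ≤ b i i :=
  sub_nonneg.mp (by simpa using (Matrix.le_iff.mp h).diag_nonneg (i := i))

lemma IsHermitian.apply_self_le_sqrt_mul_self_apply_self {m : Type*} [Fintype m]
    {S : Matrix m m ℝ} (hS : S.IsHermitian) (i : m) : S i i ≤ √((S * S) i i) := by
  refine (le_abs_self _).trans (Real.abs_le_sqrt ?_)
  rw [mul_apply, sq]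
  calc S i i * S i i ≤ ∑ j, S i j * S i j :=
        Finset.single_le_sum (f := fun j ↦ S i j * S i j) (fun j _ ↦ mul_self_nonneg _) (mem_univ i)
    _ = ∑ j, S i j * S j i := by
        refine Finset.sum_congr rfl fun j _ ↦ ?_
        rw [← hS.apply j i, star_trivial]

end Matrix

lemma matAbs_eq_abs_transpose {n : ℕ} (B : Matrix (Fin n) (Fin n) ℝ) : matAbs B = CFC.abs Bᵀ := by
  have hA : (B * Bᵀ).PosSemidef := Matrix.conjTranspose_eq_transpose_of_trivial B ▸
    Matrix.posSemidef_self_mul_conjTranspose B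
  rw [CFC.abs, star_eq_conjTranspose, conjTranspose_eq_transpose_of_trivial, transpose_transpose,
    CFC.sqrt_eq_cfc, cfc_nnreal_eq_real _ (B * Bᵀ) hA.nonneg, hA.1.cfc_eq, Matrix.IsHermitian.cfc,
    Unitary.conjStarAlgAut_apply]
  unfold matAbs
  congr 3
  funext k
  simp only [Function.comp_apply, Real.coe_sqrt, Real.coe_toNNReal', RCLike.ofReal_real_eq_id, id,
    max_eq_left (hA.eigenvalues_nonneg k)]

namespace SimpleGraph

variable {V : Type*} [Fintype V] [DecidableEq V] (G : SimpleGraph V) [DecidableRel G.Adj]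

noncomputable def degMatrixInvSqrt : Matrix V V ℝ :=
  diagonal fun v ↦ (√(G.degree v))⁻¹

noncomputable def normAdjMatrix : Matrix V V ℝ :=
  G.degMatrixInvSqrt * G.adjMatrix ℝ * G.degMatrixInvSqrt

lemma normAdjMatrix_apply (v w : V) :
    G.normAdjMatrix v w = if G.Adj v w then (√(G.degree v))⁻¹ * (√(G.degree w))⁻¹ else 0 := by
  rw [normAdjMatrix, degMatrixInvSqrt, mul_diagonal, diagonal_mul, adjMatrix_apply]
  split_ifs <;> ring

lemma isHermitian_normAdjMatrix : G.normAdjMatrix.IsHermitian := by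
  ext v w
  simp only [conjTranspose_apply, star_trivial, normAdjMatrix_apply, G.adj_comm w v, mul_comm]

lemma normAdjMatrix_mul_self_apply_self (v : V) :
    (G.normAdjMatrix * G.normAdjMatrix) v v =
      ∑ w ∈ G.neighborFinset v, ((G.degree v : ℝ) * G.degree w)⁻¹ := by
  have hterm (w : V) : G.normAdjMatrix v w * G.normAdjMatrix w v =
      if G.Adj v w then ((G.degree v : ℝ) * G.degree w)⁻¹ else 0 := by
    rw [normAdjMatrix_apply, normAdjMatrix_apply]
    by_cases h : G.Adj v w
    · rw [if_pos h, if_pos h.symm, if_pos h]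
      calc _ = ((√(G.degree v) * √(G.degree v)) * (√(G.degree w) * √(G.degree w)))⁻¹ := by ring
          _ = _ := by rw [Real.mul_self_sqrt (by positivity), Real.mul_self_sqrt (by positivity)]
    · rw [if_neg h, if_neg h, zero_mul]
  simp_rw [mul_apply, hterm, ← sum_filter, neighborFinset_eq_filter]

lemma degMatrixInvSqrt_mul_degMatrix_mul_degMatrixInvSqrt (h : ∀ v, 0 < G.degree v) :
    G.degMatrixInvSqrt * G.degMatrix ℝ * G.degMatrixInvSqrt = 1 := by
  rw [degMatrixInvSqrt, degMatrix, diagonal_mul_diagonal, diagonal_mul_diagonal, ← diagonal_one]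
  congr 1
  funext v
  have : (0 : ℝ) < G.degree v := by exact_mod_cast h v
  rw [mul_right_comm, ← mul_inv, Real.mul_self_sqrt this.le, inv_mul_cancel₀ this.ne']

lemma conjTranspose_degMatrixInvSqrt : G.degMatrixInvSqrtᴴ = G.degMatrixInvSqrt := by
  simp [degMatrixInvSqrt]

lemma degMatrix_add_adjMatrix_eq_incMatrix_mul_transpose :
    G.degMatrix ℝ + G.adjMatrix ℝ = G.incMatrix ℝ * (G.incMatrix ℝ)ᵀ := by
  rw [incMatrix_mul_transpose]
  ext v w
  by_cases hvw : v = w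
  · subst hvw; simp [degMatrix]
  · simp [degMatrix, hvw, adjMatrix_apply]

lemma posSemidef_degMatrix_add_adjMatrix : (G.degMatrix ℝ + G.adjMatrix ℝ).PosSemidef := by
  rw [degMatrix_add_adjMatrix_eq_incMatrix_mul_transpose, ← conjTranspose_eq_transpose_of_trivial]
  exact posSemidef_self_mul_conjTranspose _

lemma normAdjMatrix_le_one (h : ∀ v, 0 < G.degree v) : G.normAdjMatrix ≤ 1 := by
  rw [Matrix.le_iff]
  have : 1 - G.normAdjMatrix = G.degMatrixInvSqrt * G.lapMatrix ℝ * G.degMatrixInvSqrtᴴ := by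
    rw [conjTranspose_degMatrixInvSqrt, lapMatrix, Matrix.mul_sub, Matrix.sub_mul,
      G.degMatrixInvSqrt_mul_degMatrix_mul_degMatrixInvSqrt h, normAdjMatrix]
  rw [this]
  exact (posSemidef_lapMatrix ℝ G).mul_mul_conjTranspose_same _

lemma neg_one_le_normAdjMatrix (h : ∀ v, 0 < G.degree v) : -1 ≤ G.normAdjMatrix := by
  rw [Matrix.le_iff, sub_neg_eq_add, add_comm]
  have : 1 + G.normAdjMatrix =
      G.degMatrixInvSqrt * (G.degMatrix ℝ + G.adjMatrix ℝ) * G.degMatrixInvSqrtᴴ := by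
    rw [conjTranspose_degMatrixInvSqrt, Matrix.mul_add, Matrix.add_mul,
      G.degMatrixInvSqrt_mul_degMatrix_mul_degMatrixInvSqrt h, normAdjMatrix]
  rw [this]
  exact G.posSemidef_degMatrix_add_adjMatrix.mul_mul_conjTranspose_same _

lemma inv_maxDegree_le_normAdjMatrix_mul_self_apply_self {v : V} (hv : 0 < G.degree v) :
    (G.maxDegree : ℝ)⁻¹ ≤ (G.normAdjMatrix * G.normAdjMatrix) v v := by
  have hdv : (0 : ℝ) < G.degree v := by exact_mod_cast hv
  rw [normAdjMatrix_mul_self_apply_self]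
  calc (G.maxDegree : ℝ)⁻¹ = (G.neighborFinset v).card • ((G.degree v : ℝ) * G.maxDegree)⁻¹ := by
        rw [card_neighborFinset_eq_degree, nsmul_eq_mul, mul_inv, ← mul_assoc,
          mul_inv_cancel₀ hdv.ne', one_mul]
    _ ≤ _ := card_nsmul_le_sum _ _ _ fun w hw ↦ by
        have hvw : G.Adj v w := (G.mem_neighborFinset v w).mp hw
        have hdw : (0 : ℝ) < G.degree w := by
          exact_mod_cast (G.degree_pos_iff_exists_adj w).mpr ⟨v, hvw.symm⟩
        exact inv_anti₀ (mul_pos hdv hdw)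
          (mul_le_mul_of_nonneg_left (by exact_mod_cast G.degree_le_maxDegree w) hdv.le)

lemma normAdjMatrix_mul_self_apply_self_le_inv_minDegree (h : 0 < G.minDegree) (v : V) :
    (G.normAdjMatrix * G.normAdjMatrix) v v ≤ (G.minDegree : ℝ)⁻¹ := by
  have hδ : (0 : ℝ) < G.minDegree := by exact_mod_cast h
  have hdv : (0 : ℝ) < G.degree v := hδ.trans_le (by exact_mod_cast G.minDegree_le_degree v)
  rw [normAdjMatrix_mul_self_apply_self]
  calc _ ≤ (G.neighborFinset v).card • ((G.degree v : ℝ) * G.minDegree)⁻¹ :=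
        sum_le_card_nsmul _ _ _ fun w _ ↦ inv_anti₀ (mul_pos hdv hδ)
          (mul_le_mul_of_nonneg_left (by exact_mod_cast G.minDegree_le_degree w) hdv.le)
    _ = _ := by
        rw [card_neighborFinset_eq_degree, nsmul_eq_mul, mul_inv, ← mul_assoc,
          mul_inv_cancel₀ hdv.ne', one_mul]

end SimpleGraph

section

variable {n : ℕ} (G : SimpleGraph (Fin n)) [DecidableRel G.Adj]

lemma normLap_sub_one : normLap G - 1 = -G.normAdjMatrix := by
  rw [normLap, sub_sub_cancel_left]
  rfl

lemma vertexNormLapEnergy_eq_abs_normAdjMatrix (i : Fin n) :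
    vertexNormLapEnergy G i = CFC.abs G.normAdjMatrix i i := by
  rw [vertexNormLapEnergy, matAbs_eq_abs_transpose, normLap_sub_one, transpose_neg, CFC.abs_neg,
    ← conjTranspose_eq_transpose_of_trivial, G.isHermitian_normAdjMatrix.eq]

lemma vertexNormLapEnergy_le_sqrt (i : Fin n) :
    vertexNormLapEnergy G i ≤ √((G.normAdjMatrix * G.normAdjMatrix) i i) := by
  have hN := G.isHermitian_normAdjMatrix.isSelfAdjoint
  have habs := (nonneg_iff_posSemidef.mp (CFC.abs_nonneg G.normAdjMatrix)).isHermitian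
  have hsq : G.normAdjMatrix * G.normAdjMatrix =
      CFC.abs G.normAdjMatrix * CFC.abs G.normAdjMatrix := by
    rw [CFC.abs_mul_abs, hN.star_eq]
  rw [vertexNormLapEnergy_eq_abs_normAdjMatrix, hsq]
  exact habs.apply_self_le_sqrt_mul_self_apply_self i

lemma normAdjMatrix_mul_self_apply_self_le_vertexNormLapEnergy (h : ∀ v, 0 < G.degree v)
    (i : Fin n) : (G.normAdjMatrix * G.normAdjMatrix) i i ≤ vertexNormLapEnergy G i := by
  rw [vertexNormLapEnergy_eq_abs_normAdjMatrix]
  exact apply_self_le_of_le (CFC.mul_self_le_abs G.isHermitian_normAdjMatrix.isSelfAdjoint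
    (G.neg_one_le_normAdjMatrix h) (G.normAdjMatrix_le_one h)) i

end

theorem stmt14 {n : ℕ} (G : SimpleGraph (Fin n)) [DecidableRel G.Adj]
    (hconn : G.Connected) (i : Fin n) :
    1 / (G.maxDegree : ℝ) ≤ vertexNormLapEnergy G i ∧
      vertexNormLapEnergy G i ≤ 1 / Real.sqrt (G.minDegree : ℝ) := by
  rcases subsingleton_or_nontrivial (Fin n) with hV | hV
  · have hN : G.normAdjMatrix = 0 := by
      ext v w
      simp [SimpleGraph.normAdjMatrix_apply, Subsingleton.elim v w]
    simp [vertexNormLapEnergy_eq_abs_normAdjMatrix, hN]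
  · have hdeg (v : Fin n) : 0 < G.degree v := hconn.preconnected.degree_pos_of_nontrivial v
    constructor
    · calc 1 / (G.maxDegree : ℝ) = (G.maxDegree : ℝ)⁻¹ := one_div _
        _ ≤ (G.normAdjMatrix * G.normAdjMatrix) i i :=
          G.inv_maxDegree_le_normAdjMatrix_mul_self_apply_self (hdeg i)
        _ ≤ vertexNormLapEnergy G i :=
          normAdjMatrix_mul_self_apply_self_le_vertexNormLapEnergy G hdeg i
    · calc vertexNormLapEnergy G i ≤ √((G.normAdjMatrix * G.normAdjMatrix) i i) :=
          vertexNormLapEnergy_le_sqrt G i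
        _ ≤ √((G.minDegree : ℝ)⁻¹) := Real.sqrt_le_sqrt
          (G.normAdjMatrix_mul_self_apply_self_le_inv_minDegree
            hconn.preconnected.minDegree_pos_of_nontrivial i)
        _ = 1 / √(G.minDegree : ℝ) := by rw [Real.sqrt_inv, one_div]
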